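/- arXiv:0707.1411 — 4 statements merged into one kernel-verified Lean document; each statement's English description precedes it below -/
import Mathlib

section
/- Let K be a pure, strongly connected d-dimensional simplicial complex whose graph admits a proper (d+1)-coloring (i.e. K is foldable). Then the group of projectivities Π(K, σ₀) is trivial for every facet σ₀. In particular, for any two facets σ, τ and any two facet paths γ, δ from σ to τ, the projectivities ⟨γ⟩ and ⟨δ⟩ coincide. -/
open Finset

variable {V : Type*} [DecidableEq V]

/-- A (finite abstract) simplicial complex: faces are nonempty and closed under
nonempty subsets. -/
def IsComplex (K : Finset (Finset V)) : Prop :=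
  ∀ f ∈ K, f.Nonempty ∧ ∀ g, g ⊆ f → g.Nonempty → g ∈ K

/-- `K` is pure of dimension `d`: every face is contained in a face with `d+1` vertices. -/
def IsPure (K : Finset (Finset V)) (d : ℕ) : Prop :=
  ∀ f ∈ K, ∃ σ ∈ K, f ⊆ σ ∧ σ.card = d + 1

/-- A facet of a pure `d`-complex: a face with `d+1` vertices. -/
def IsFacet (K : Finset (Finset V)) (d : ℕ) (σ : Finset V) : Prop :=
  σ ∈ K ∧ σ.card = d + 1

/-- Two facets are neighboring if they share a ridge (codimension-1 face). -/
def Neighboring (K : Finset (Finset V)) (d : ℕ) (σ τ : Finset V) : Prop :=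
  IsFacet K d σ ∧ IsFacet K d τ ∧ (σ ∩ τ).card = d

/-- The perspectivity `⟨σ,τ⟩` between neighboring facets: it fixes the common
vertices and sends the vertex `σ \ τ` to the vertex `τ \ σ`. -/
noncomputable def persp (σ τ : Finset V) (v : V) : V :=
  if v ∈ τ then v else if h : (τ \ σ).Nonempty then h.choose else v

/-- The projectivity along a facet path: the composition of consecutive perspectivities. -/
noncomputable def projAlong : List (Finset V) → V → V
  | [] => id
  | [_] => id
  | σ :: τ :: rest => fun v => projAlong (τ :: rest) (persp σ τ v)

/-- A facet path: a nonempty sequence of facets in which consecutive facets share a ridge. -/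
def IsFacetPath (K : Finset (Finset V)) (d : ℕ) (γ : List (Finset V)) : Prop :=
  γ ≠ [] ∧ (∀ σ ∈ γ, IsFacet K d σ) ∧ γ.Chain' (fun σ τ => (σ ∩ τ).card = d)

/-- `K` is strongly connected: any two facets are joined by a facet path. -/
def StronglyConnected (K : Finset (Finset V)) (d : ℕ) : Prop :=
  ∀ σ τ, IsFacet K d σ → IsFacet K d τ →
    ∃ γ, IsFacetPath K d γ ∧ γ.head? = some σ ∧ γ.getLast? = some τ

/-- `K` is locally strongly connected: the star of every face is strongly connected. -/
def LocallyStronglyConnected (K : Finset (Finset V)) (d : ℕ) : Prop :=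
  ∀ f ∈ K, ∀ σ τ, IsFacet K d σ → IsFacet K d τ → f ⊆ σ → f ⊆ τ →
    ∃ γ, IsFacetPath K d γ ∧ γ.head? = some σ ∧ γ.getLast? = some τ ∧ ∀ ρ ∈ γ, f ⊆ ρ

/-- The vertex set of a complex. -/
def vertexSet (K : Finset (Finset V)) : Finset V := K.biUnion id

/-- A proper coloring of the 1-skeleton of `K`: the endpoints of every edge
(2-element face) receive distinct colors. -/
def ProperColoring {α : Type*} (K : Finset (Finset V)) (c : V → α) : Prop :=
  ∀ v w, v ≠ w → ({v, w} : Finset V) ∈ K → c v ≠ c w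

/-- A codimension-2 face `f` is odd if its link graph is not 2-colorable (not bipartite). -/
def OddFace (K : Finset (Finset V)) (f : Finset V) : Prop :=
  ¬ ∃ b : V → Bool, ∀ w w', w ∉ f → w' ∉ f → w ≠ w' →
      f ∪ {w, w'} ∈ K → b w ≠ b w'

/-- Stellar subdivision of the edge `e` of `K` by the new vertex `u`:
faces not containing `e` are kept; every face containing `e` is replaced by the
cones of `u` over the faces of its boundary not containing `e`. -/
def stellarSub (K : Finset (Finset V)) (e : Finset V) (u : V) : Finset (Finset V) :=
  K.filter (fun f => ¬ e ⊆ f) ∪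
    (K.filter fun f => e ⊆ f).biUnion fun f =>
      e.biUnion fun x => ((f.erase x).powerset).image fun g => insert u g

/-- `EdgeSubdivSeq K K'` : `K'` is obtained from `K` by a finite sequence of stellar
subdivisions of edges (each subdividing vertex being a fresh vertex). -/
inductive EdgeSubdivSeq : Finset (Finset V) → Finset (Finset V) → Prop
  | refl (K : Finset (Finset V)) : EdgeSubdivSeq K K
  | step (K L : Finset (Finset V)) (e : Finset V) (u : V) :
      EdgeSubdivSeq K L → e ∈ L → e.card = 2 → u ∉ vertexSet L →
      EdgeSubdivSeq K (stellarSub L e u)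

/-- A boundary ridge: a `(d-1)`-dimensional face contained in exactly one facet. -/
def IsBoundaryRidge (K : Finset (Finset V)) (d : ℕ) (g : Finset V) : Prop :=
  g ∈ K ∧ g.card = d ∧ (K.filter fun τ => τ.card = d + 1 ∧ g ⊆ τ).card = 1


/-!
A proper `(d+1)`-coloring is injective on every face, hence a bijection from each facet onto
the colors. A perspectivity `⟨σ, τ⟩` therefore sends the vertex of `σ \ τ` to the vertex of
`τ \ σ`, which has the same color: the one color missing from the common ridge. So every
projectivity preserves colors, and a projectivity ending at the facet `τ` sends `v` to the
unique vertex of `τ` with the color of `v`, whatever the path.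
-/

variable {K : Finset (Finset V)} {d : ℕ}

theorem ProperColoring.injOn_of_mem {α : Type*} {c : V → α} (hK : IsComplex K)
    (hc : ProperColoring K c) {σ : Finset V} (hσ : σ ∈ K) : Set.InjOn c σ := by
  intro v hv w hw hcvw
  by_contra hvw
  refine hc v w hvw ((hK σ hσ).2 {v, w} ?_ (insert_nonempty v {w})) hcvw
  simp only [insert_subset_iff, singleton_subset_iff]
  exact ⟨hv, hw⟩

theorem IsFacet.exists_mem_color_eq {c : V → Fin (d + 1)} (hK : IsComplex K)
    (hc : ProperColoring K c) {σ : Finset V} (hσ : IsFacet K d σ) (i : Fin (d + 1)) :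
    ∃ x ∈ σ, c x = i := by
  have himage : σ.image c = univ := by
    apply eq_univ_of_card
    rw [card_image_of_injOn (hc.injOn_of_mem hK hσ.1), hσ.2, Fintype.card_fin]
  simpa [← himage] using mem_univ i

theorem card_sdiff_eq_one_of_isFacet {σ τ : Finset V} (hσ : IsFacet K d σ)
    (hστ : (σ ∩ τ).card = d) : (σ \ τ).card = 1 := by
  have := card_sdiff_add_card_inter σ τ
  rw [hσ.2, hστ] at this
  omega

theorem sdiff_nonempty_of_isFacet {σ τ : Finset V} (hτ : IsFacet K d τ)
    (hστ : (σ ∩ τ).card = d) : (τ \ σ).Nonempty := by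
  rw [← card_pos, card_sdiff_eq_one_of_isFacet hτ (by rwa [inter_comm])]
  exact one_pos

theorem persp_mem {σ τ : Finset V} (hτσ : (τ \ σ).Nonempty) (v : V) : persp σ τ v ∈ τ := by
  unfold persp
  split_ifs with hv
  · exact hv
  · exact (mem_sdiff.mp hτσ.choose_spec).1

theorem persp_color {c : V → Fin (d + 1)} (hK : IsComplex K) (hc : ProperColoring K c)
    {σ τ : Finset V} (hσ : IsFacet K d σ) (hτ : IsFacet K d τ) (hστ : (σ ∩ τ).card = d)
    {v : V} (hv : v ∈ σ) : c (persp σ τ v) = c v := by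
  by_cases hvτ : v ∈ τ
  · simp only [persp, hvτ, if_true]
  have hτσ : (τ \ σ).Nonempty := sdiff_nonempty_of_isFacet hτ hστ
  obtain ⟨hwτ, hwσ⟩ := mem_sdiff.mp hτσ.choose_spec
  simp only [persp, hvτ, if_false, dif_pos hτσ]
  obtain ⟨x, hxσ, hcx⟩ := hσ.exists_mem_color_eq hK hc (c hτσ.choose)
  -- `x` cannot lie on the ridge, where it would equal `hτσ.choose ∉ σ`
  have hxτ : x ∉ τ := fun hxτ => hwσ (hc.injOn_of_mem hK hτ.1 hxτ hwτ hcx ▸ hxσ)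
  have hxv : x = v := card_le_one.mp (card_sdiff_eq_one_of_isFacet hσ hστ).le x
    (mem_sdiff.mpr ⟨hxσ, hxτ⟩) v (mem_sdiff.mpr ⟨hv, hvτ⟩)
  rw [← hcx, hxv]

theorem IsFacetPath.tail {σ : Finset V} {γ : List (Finset V)} (hγ : IsFacetPath K d (σ :: γ))
    (hne : γ ≠ []) : IsFacetPath K d γ :=
  ⟨hne, fun ρ hρ => hγ.2.1 ρ (List.mem_cons_of_mem σ hρ), hγ.2.2.tail⟩

theorem IsFacetPath.projAlong_mem_and_color {c : V → Fin (d + 1)} (hK : IsComplex K)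
    (hc : ProperColoring K c) {γ : List (Finset V)} (hγ : IsFacetPath K d γ) {σ τ : Finset V}
    (hσ : γ.head? = some σ) (hτ : γ.getLast? = some τ) {v : V} (hv : v ∈ σ) :
    projAlong γ v ∈ τ ∧ c (projAlong γ v) = c v := by
  induction γ generalizing σ v with
  | nil => exact absurd rfl hγ.1
  | cons σ' γ ih =>
    obtain rfl : σ' = σ := Option.some.inj hσ
    match γ, hγ, hτ, ih with
    | [], _, hτ, _ =>
      obtain rfl : σ' = τ := Option.some.inj hτ
      exact ⟨hv, rfl⟩
    | ρ :: γ, hγ, hτ, ih =>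
      have hσρ : (σ' ∩ ρ).card = d := (List.isChain_cons_cons.mp hγ.2.2).1
      have hpersp : persp σ' ρ v ∈ ρ ∧ c (persp σ' ρ v) = c v :=
        ⟨persp_mem (sdiff_nonempty_of_isFacet (hγ.2.1 ρ (by simp)) hσρ) v,
          persp_color hK hc (hγ.2.1 σ' (by simp)) (hγ.2.1 ρ (by simp)) hσρ hv⟩
      obtain ⟨hmem, hcol⟩ := ih (hγ.tail (List.cons_ne_nil ρ γ)) rfl
        (by rwa [List.getLast?_cons_cons] at hτ) hpersp.1
      exact ⟨hmem, hcol.trans hpersp.2⟩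

theorem foldable_projectivities_trivial_general
    (K : Finset (Finset V)) (d : ℕ) (hK : IsComplex K)
    (c : V → Fin (d + 1)) (hc : ProperColoring K c) :
    (∀ σ₀ γ, IsFacetPath K d γ → γ.head? = some σ₀ → γ.getLast? = some σ₀ →
      ∀ v ∈ σ₀, projAlong γ v = v) ∧
    (∀ σ τ γ δ, IsFacetPath K d γ → IsFacetPath K d δ →
      γ.head? = some σ → δ.head? = some σ →
      γ.getLast? = some τ → δ.getLast? = some τ →
      ∀ v ∈ σ, projAlong γ v = projAlong δ v) := by
  have hfacet {γ : List (Finset V)} {τ : Finset V} (hγ : IsFacetPath K d γ)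
      (hτ : γ.getLast? = some τ) : IsFacet K d τ :=
    hγ.2.1 τ (List.mem_of_getLast? hτ)
  constructor
  · intro σ₀ γ hγ hσ hτ v hv
    obtain ⟨hmem, hcol⟩ := hγ.projAlong_mem_and_color hK hc hσ hτ hv
    exact hc.injOn_of_mem hK (hfacet hγ hτ).1 hmem hv hcol
  · intro σ τ γ δ hγ hδ hγσ hδσ hγτ hδτ v hv
    obtain ⟨hγmem, hγcol⟩ := hγ.projAlong_mem_and_color hK hc hγσ hγτ hv
    obtain ⟨hδmem, hδcol⟩ := hδ.projAlong_mem_and_color hK hc hδσ hδτ hv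
    exact hc.injOn_of_mem hK (hfacet hγ hγτ).1 hγmem hδmem (hγcol.trans hδcol.symm)

/-- For a pure, strongly connected, foldable `d`-complex the group of
projectivities is trivial; in particular any two facet paths with the same endpoints
induce the same projectivity. -/
theorem foldable_projectivities_trivial
    (K : Finset (Finset V)) (d : ℕ) (hK : IsComplex K) (hpure : IsPure K d)
    (hconn : StronglyConnected K d)
    (c : V → Fin (d + 1)) (hc : ProperColoring K c) :
    (∀ σ₀ γ, IsFacetPath K d γ → γ.head? = some σ₀ → γ.getLast? = some σ₀ →
      ∀ v ∈ σ₀, projAlong γ v = v) ∧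
    (∀ σ τ γ δ, IsFacetPath K d γ → IsFacetPath K d δ →
      γ.head? = some σ → δ.head? = some σ →
      γ.getLast? = some τ → δ.getLast? = some τ →
      ∀ v ∈ σ, projAlong γ v = projAlong δ v) :=
  foldable_projectivities_trivial_general K d hK c hc
end

section
/- Let K be a pure, strongly connected d-dimensional simplicial complex. If the 1-skeleton of K admits a proper (d+1)-coloring, then this coloring is unique up to a permutation of the colors. Moreover, no proper coloring of the 1-skeleton of K with fewer than d+1 colors exists. -/
open Finset

variable {V : Type*} [DecidableEq V]

/-!
Each facet has `d + 1` pairwise adjacent vertices, so a proper coloring is injective on it; this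
rules out fewer than `d + 1` colors, and with exactly `d + 1` colors it makes the coloring a
bijection from each facet onto the colors. Two such colorings therefore differ by a permutation
`π` on one facet. Crossing a ridge into a neighboring facet adds a single vertex, whose color
under either coloring is forced to be the one color missing from the ridge, so `c₂ = π ∘ c₁`
spreads along facet paths and, by strong connectivity and purity, to every vertex.
-/

variable {K : Finset (Finset V)} {d : ℕ}

theorem ProperColoring.card_le_of_mem {α : Type*} [Fintype α] {c : V → α} (hK : IsComplex K)
    (hc : ProperColoring K c) {σ : Finset V} (hσ : σ ∈ K) : σ.card ≤ Fintype.card α :=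
  card_le_card_of_injOn c (fun _ _ => mem_univ _) (hc.injOn_of_mem hK hσ)

theorem eq_of_injOn_of_eq_off {ι α : Type*} [Fintype α] {f g : ι → α} {s : Finset ι} {v : ι}
    (hf : Set.InjOn f s) (hg : Set.InjOn g s) (hcard : Fintype.card α ≤ s.card)
    (hv : v ∈ s) (hfg : ∀ w ∈ s, w ≠ v → f w = g w) : f v = g v := by
  obtain ⟨w, hw, hgw⟩ :=
    surjOn_of_injOn_of_card_le g (fun _ _ => mem_univ _) hg hcard (mem_univ (f v))
  by_cases hwv : w = v
  · exact hwv ▸ hgw.symm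
  · exact absurd (hf hw hv ((hfg w hw hwv).trans hgw)) hwv

theorem exists_perm_eqOn {ι α : Type*} [Fintype α] {c₁ c₂ : ι → α} {s : Finset ι}
    (h₁ : Set.InjOn c₁ s) (h₂ : Set.InjOn c₂ s) (hcard : s.card = Fintype.card α) :
    ∃ π : Equiv.Perm α, ∀ v ∈ s, c₂ v = π (c₁ v) := by
  have bij : ∀ c : ι → α, Set.InjOn c s → Function.Bijective (fun x : s => c x) := fun c hc =>
    (Fintype.bijective_iff_injective_and_card _).2
      ⟨fun x y hxy => Subtype.ext (hc x.2 y.2 hxy), by simp [hcard]⟩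
  let e₁ := Equiv.ofBijective _ (bij c₁ h₁)
  let e₂ := Equiv.ofBijective _ (bij c₂ h₂)
  refine ⟨e₁.symm.trans e₂, fun v hv => ?_⟩
  have : e₁.symm (c₁ v) = ⟨v, hv⟩ := e₁.symm_apply_eq.2 rfl
  simp only [Equiv.trans_apply, this]
  rfl

theorem Neighboring.eq_of_mem_of_notMem {σ τ : Finset V} (h : Neighboring K d σ τ)
    {v w : V} (hv : v ∈ τ) (hvσ : v ∉ σ) (hw : w ∈ τ) (hwσ : w ∉ σ) : v = w := by
  have hcard : (τ \ σ).card = 1 := by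
    rw [card_sdiff, h.2.2, h.2.1.2]
    omega
  exact card_le_one.1 hcard.le v (mem_sdiff.2 ⟨hv, hvσ⟩) w (mem_sdiff.2 ⟨hw, hwσ⟩)

theorem IsFacetPath.induction {P : Finset V → Prop} {γ : List (Finset V)}
    (hγ : IsFacetPath K d γ) (step : ∀ σ τ, Neighboring K d σ τ → P σ → P τ)
    (hhead : ∀ σ ∈ γ.head?, P σ) : ∀ σ ∈ γ, P σ := by
  have hchain : γ.IsChain (Neighboring K d) :=
    (List.IsChain.iff_mem.1 hγ.2.2).imp fun σ τ ⟨hσ, hτ, hστ⟩ =>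
      ⟨hγ.2.1 σ hσ, hγ.2.1 τ hτ, hστ⟩
  exact hchain.induction P γ step fun hne => hhead _ (List.head?_eq_some_head hne)

theorem StronglyConnected.induction {P : Finset V → Prop} (hconn : StronglyConnected K d)
    {σ₀ : Finset V} (hσ₀ : IsFacet K d σ₀) (h₀ : P σ₀)
    (step : ∀ σ τ, Neighboring K d σ τ → P σ → P τ) {τ : Finset V} (hτ : IsFacet K d τ) :
    P τ := by
  obtain ⟨γ, hγ, hhead, hlast⟩ := hconn σ₀ τ hσ₀ hτ
  exact hγ.induction step (by simpa [hhead]) τ (List.mem_of_getLast? hlast)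

theorem IsPure.exists_facet_mem (hpure : IsPure K d) {v : V} (hv : v ∈ vertexSet K) :
    ∃ τ, IsFacet K d τ ∧ v ∈ τ := by
  obtain ⟨f, hf, hvf⟩ := mem_biUnion.1 hv
  obtain ⟨τ, hτ, hfτ, hcard⟩ := hpure f hf
  exact ⟨τ, ⟨hτ, hcard⟩, hfτ hvf⟩

theorem Neighboring.eqOn_perm {c₁ c₂ : V → Fin (d + 1)} (hK : IsComplex K)
    (hc₁ : ProperColoring K c₁) (hc₂ : ProperColoring K c₂) (π : Equiv.Perm (Fin (d + 1)))
    {σ τ : Finset V} (h : Neighboring K d σ τ) (hσ : ∀ v ∈ σ, c₂ v = π (c₁ v)) :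
    ∀ v ∈ τ, c₂ v = π (c₁ v) := by
  intro v hv
  by_cases hvσ : v ∈ σ
  · exact hσ v hvσ
  refine eq_of_injOn_of_eq_off (hc₂.injOn_of_mem hK h.2.1.1)
    (π.injective.comp_injOn (hc₁.injOn_of_mem hK h.2.1.1)) (by simp [h.2.1.2]) hv
    fun w hw hwv => hσ w ?_
  by_contra hwσ
  exact hwv (h.eq_of_mem_of_notMem hw hwσ hv hvσ)

/-- A proper `(d+1)`-coloring of a pure, strongly connected `d`-complex is
unique up to a permutation of the colors, and there is no proper coloring with fewer
than `d+1` colors. -/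
theorem foldable_coloring_unique
    (K : Finset (Finset V)) (d : ℕ) (hK : IsComplex K) (hpure : IsPure K d)
    (hconn : StronglyConnected K d) (hne : K.Nonempty) :
    (∀ c₁ c₂ : V → Fin (d + 1), ProperColoring K c₁ → ProperColoring K c₂ →
      ∃ π : Equiv.Perm (Fin (d + 1)), ∀ v ∈ vertexSet K, c₂ v = π (c₁ v)) ∧
    (∀ k, k < d + 1 → ¬ ∃ c : V → Fin k, ProperColoring K c) := by
  obtain ⟨f₀, hf₀⟩ := hne
  obtain ⟨σ₀, hσ₀K, -, hσ₀card⟩ := hpure f₀ hf₀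
  refine ⟨fun c₁ c₂ hc₁ hc₂ => ?_, fun k hk ⟨c, hc⟩ => ?_⟩
  · obtain ⟨π, hπ⟩ := exists_perm_eqOn (hc₁.injOn_of_mem hK hσ₀K) (hc₂.injOn_of_mem hK hσ₀K)
      (by simp [hσ₀card])
    refine ⟨π, fun v hv => ?_⟩
    obtain ⟨τ, hτ, hvτ⟩ := hpure.exists_facet_mem hv
    exact hconn.induction (P := fun σ => ∀ v ∈ σ, c₂ v = π (c₁ v)) ⟨hσ₀K, hσ₀card⟩ hπ
      (fun σ τ h => h.eqOn_perm hK hc₁ hc₂ π) hτ v hvτ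
  · have := hc.card_le_of_mem hK hσ₀K
    simp only [Fintype.card_fin, hσ₀card] at this
    omega
end

section
/- Let K be a pure, strongly connected simplicial d-complex with facet σ₀. The number of connected components of the partial unfolding of K equals the number of orbits of Π(K,σ₀) on V(σ₀); in particular, if Π(K,σ₀) acts transitively on the d+1 vertices of σ₀ then the partial unfolding is connected, and if K is foldable then the partial unfolding has exactly d+1 connected components, each mapping isomorphically to K under the canonical projection. -/
open Finset

variable {V : Type*} [DecidableEq V]

/-- Adjacency of labeled facets in the partial unfolding. -/
def unfAdj (K : Finset (Finset V)) (d : ℕ) (p q : Finset V × V) : Prop :=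
  Neighboring K d p.1 q.1 ∧ p.2 ∈ p.1 ∧ q.2 ∈ q.1 ∧ persp p.1 q.1 p.2 = q.2

/-- Reachability (connected components) in the partial unfolding. -/
def UnfReach (K : Finset (Finset V)) (d : ℕ) : Finset V × V → Finset V × V → Prop :=
  Relation.ReflTransGen fun p q => unfAdj K d p q ∨ unfAdj K d q p

/-! The perspectivity between neighboring facets fixes their common ridge and swaps the two
opposite vertices, so a step of the partial unfolding can be undone, and a chain of steps from
`(σ₀, v)` is exactly a facet path `γ` from `σ₀` read together with `projAlong γ v`. Hence the
component of `(σ₀, v)` meets the fibre over `σ₀` in the orbit of `v` under `Π(K, σ₀)`, and by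
strong connectivity every component meets that fibre. A proper `(d+1)`-coloring is injective on
every facet, hence bijective onto the colors, and perspectivities preserve colors; so reachability
preserves colors, and conversely two vertices of the same color are linked by transporting along
any facet path. -/

section Perspectivity

variable {K : Finset (Finset V)} {d : ℕ} {σ τ : Finset V}

theorem Neighboring.symm (h : Neighboring K d σ τ) : Neighboring K d τ σ :=
  ⟨h.2.1, h.1, by rw [inter_comm]; exact h.2.2⟩

theorem Neighboring.card_sdiff (h : Neighboring K d σ τ) : (τ \ σ).card = 1 := by
  have := card_sdiff_add_card_inter τ σ
  rw [inter_comm, h.2.2, h.2.1.2] at this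
  omega

theorem Neighboring.eq_of_mem_sdiff (h : Neighboring K d σ τ) {x y : V} (hx : x ∈ σ \ τ)
    (hy : y ∈ σ \ τ) : x = y :=
  card_le_one.mp h.symm.card_sdiff.le x hx y hy

theorem persp_of_mem {v : V} (hv : v ∈ τ) : persp σ τ v = v := if_pos hv

theorem Neighboring.persp_mem_sdiff (h : Neighboring K d σ τ) {v : V} (hv : v ∉ τ) :
    persp σ τ v ∈ τ \ σ := by
  have hne : (τ \ σ).Nonempty := card_pos.mp (by rw [h.card_sdiff]; exact one_pos)
  rw [persp, if_neg hv, dif_pos hne]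
  exact hne.choose_spec

theorem Neighboring.persp_mem (h : Neighboring K d σ τ) (v : V) :
    persp σ τ v ∈ τ := by
  by_cases hvτ : v ∈ τ
  · rwa [persp_of_mem hvτ]
  · exact (mem_sdiff.mp (h.persp_mem_sdiff hvτ)).1

theorem Neighboring.persp_persp (h : Neighboring K d σ τ) {v : V} (hv : v ∈ σ) :
    persp τ σ (persp σ τ v) = v := by
  by_cases hvτ : v ∈ τ
  · rw [persp_of_mem hvτ, persp_of_mem hv]
  · have hu := h.persp_mem_sdiff hvτ
    exact h.eq_of_mem_sdiff (h.symm.persp_mem_sdiff (mem_sdiff.mp hu).2) (mem_sdiff.mpr ⟨hv, hvτ⟩)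

end Perspectivity

section FacetPath

variable {K : Finset (Finset V)} {d : ℕ}

theorem IsFacetPath.singleton {σ : Finset V} (hσ : IsFacet K d σ) : IsFacetPath K d [σ] :=
  ⟨List.cons_ne_nil _ _, by simpa using hσ, List.isChain_singleton _⟩

theorem IsFacetPath.neighboring_of_cons_cons {σ τ : Finset V} {γ : List (Finset V)}
    (h : IsFacetPath K d (σ :: τ :: γ)) : Neighboring K d σ τ :=
  ⟨h.2.1 σ (by simp), h.2.1 τ (by simp), (List.isChain_cons_cons.mp h.2.2).1⟩

theorem IsFacetPath.of_cons_cons {σ τ : Finset V} {γ : List (Finset V)}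
    (h : IsFacetPath K d (σ :: τ :: γ)) : IsFacetPath K d (τ :: γ) :=
  ⟨List.cons_ne_nil _ _, fun ρ hρ => h.2.1 ρ (List.mem_cons_of_mem σ hρ),
    (List.isChain_cons_cons.mp h.2.2).2⟩

theorem IsFacetPath.concat {γ : List (Finset V)} {σ τ : Finset V} (hγ : IsFacetPath K d γ)
    (hlast : γ.getLast? = some σ) (hστ : Neighboring K d σ τ) : IsFacetPath K d (γ ++ [τ]) := by
  refine ⟨by simp, fun ρ hρ => ?_, hγ.2.2.append (List.isChain_singleton _) ?_⟩
  · rcases List.mem_append.mp hρ with hρ | hρ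
    · exact hγ.2.1 ρ hρ
    · rw [List.mem_singleton.mp hρ]; exact hστ.2.1
  · rw [hlast]
    intro x hx y hy
    cases hx
    cases hy
    exact hστ.2.2

theorem projAlong_concat :
    ∀ (γ : List (Finset V)) {σ : Finset V} (τ : Finset V) (v : V), γ.getLast? = some σ →
      projAlong (γ ++ [τ]) v = persp σ τ (projAlong γ v)
  | [], _, _, _, h => by simp at h
  | [_], _, _, _, h => by
    obtain rfl := Option.some_injective _ h
    rfl
  | _ :: ρ :: γ, _, τ, v, h => projAlong_concat (ρ :: γ) τ _ (by simpa using h)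

end FacetPath

section Unfolding

variable {K : Finset (Finset V)} {d : ℕ} {p q : Finset V × V}

theorem unfAdj.symm (h : unfAdj K d p q) : unfAdj K d q p := by
  obtain ⟨hpq, hp, hq, hpersp⟩ := h
  exact ⟨hpq.symm, hq, hp, hpersp ▸ hpq.persp_persp hp⟩

theorem UnfReach.symm (h : UnfReach K d p q) : UnfReach K d q p :=
  Relation.ReflTransGen.mono (fun _ _ => Or.symm) _ _ h.swap

theorem UnfReach.mem (h : UnfReach K d p q) (hp : p.2 ∈ p.1) : q.2 ∈ q.1 := by
  induction h with
  | refl => exact hp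
  | tail _ hstep _ => exact (hstep.elim id unfAdj.symm).2.2.1

theorem IsFacetPath.unfReach_projAlong :
    ∀ {γ : List (Finset V)}, IsFacetPath K d γ → ∀ {σ τ : Finset V}, γ.head? = some σ →
      γ.getLast? = some τ → ∀ {v : V}, v ∈ σ → UnfReach K d (σ, v) (τ, projAlong γ v)
  | [], hγ, _, _, _, _, _, _ => absurd rfl hγ.1
  | [_], _, _, _, hhead, hlast, _, _ => by
    obtain rfl := Option.some_injective _ hhead
    obtain rfl := Option.some_injective _ hlast
    exact Relation.ReflTransGen.refl
  | _ :: _ :: _, hγ, _, _, hhead, hlast, _, hv => by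
    obtain rfl := Option.some_injective _ hhead
    have hστ := hγ.neighboring_of_cons_cons
    exact Relation.ReflTransGen.head (Or.inl ⟨hστ, hv, hστ.persp_mem _, rfl⟩)
      (hγ.of_cons_cons.unfReach_projAlong rfl (by simpa using hlast) (hστ.persp_mem _))

theorem UnfReach.exists_facetPath {σ₀ : Finset V} (h0 : IsFacet K d σ₀) {v : V}
    (h : UnfReach K d (σ₀, v) p) :
    ∃ γ, IsFacetPath K d γ ∧ γ.head? = some σ₀ ∧ γ.getLast? = some p.1 ∧
      projAlong γ v = p.2 := by
  induction h with
  | refl => exact ⟨[σ₀], .singleton h0, rfl, rfl, rfl⟩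
  | @tail q r _ hstep ih =>
    obtain ⟨γ, hγ, hhead, hlast, hproj⟩ := ih
    obtain ⟨hqr, -, -, hpersp⟩ := hstep.elim id unfAdj.symm
    refine ⟨γ ++ [r.1], hγ.concat hlast hqr, ?_, by simp, ?_⟩
    · rw [List.head?_append, hhead]; rfl
    · rw [projAlong_concat γ r.1 v hlast, hproj, hpersp]

theorem unfReach_iff_exists_projAlong {σ₀ : Finset V} (h0 : IsFacet K d σ₀) {v w : V}
    (hv : v ∈ σ₀) :
    UnfReach K d (σ₀, v) (σ₀, w) ↔
      ∃ γ, IsFacetPath K d γ ∧ γ.head? = some σ₀ ∧ γ.getLast? = some σ₀ ∧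
        projAlong γ v = w := by
  refine ⟨UnfReach.exists_facetPath h0, ?_⟩
  rintro ⟨γ, hγ, hhead, hlast, rfl⟩
  exact hγ.unfReach_projAlong hhead hlast hv

theorem StronglyConnected.exists_mem_unfReach (hconn : StronglyConnected K d) {σ₀ τ : Finset V}
    (h0 : IsFacet K d σ₀) (hτ : IsFacet K d τ) {w : V} (hw : w ∈ τ) :
    ∃ v ∈ σ₀, UnfReach K d (σ₀, v) (τ, w) := by
  obtain ⟨γ, hγ, hhead, hlast⟩ := hconn τ σ₀ hτ h0
  have hreach := hγ.unfReach_projAlong hhead hlast hw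
  exact ⟨_, hreach.mem hw, hreach.symm⟩

end Unfolding

section Coloring

variable {K : Finset (Finset V)} {d : ℕ} {c : V → Fin (d + 1)}

theorem ProperColoring.injOn {α : Type*} {c : V → α} (hc : ProperColoring K c)
    (hK : IsComplex K) {σ : Finset V} (hσ : σ ∈ K) : Set.InjOn c σ := by
  intro v hv w hw hcvw
  by_contra hne
  have hedge : ({v, w} : Finset V) ∈ K :=
    (hK σ hσ).2 {v, w} (insert_subset hv (singleton_subset_iff.mpr hw)) (insert_nonempty _ _)
  exact hc v w hne hedge hcvw

theorem ProperColoring.image_eq_univ (hc : ProperColoring K c) (hK : IsComplex K)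
    {σ : Finset V} (hσ : IsFacet K d σ) : σ.image c = univ := by
  apply eq_univ_of_card
  rw [card_image_of_injOn (hc.injOn hK hσ.1), hσ.2, Fintype.card_fin]

theorem ProperColoring.existsUnique_mem (hc : ProperColoring K c) (hK : IsComplex K)
    {σ : Finset V} (hσ : IsFacet K d σ) (i : Fin (d + 1)) : ∃! v, v ∈ σ ∧ c v = i := by
  obtain ⟨v, hv, rfl⟩ := mem_image.mp (hc.image_eq_univ hK hσ ▸ mem_univ i)
  exact ⟨v, ⟨hv, rfl⟩, fun w hw => hc.injOn hK hσ.1 hw.1 hv hw.2⟩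

/-- The vertex `τ \ σ` gets the color missing from the ridge `σ ∩ τ`, which is that of `σ \ τ`. -/
theorem ProperColoring.apply_persp (hc : ProperColoring K c) (hK : IsComplex K) {σ τ : Finset V}
    (h : Neighboring K d σ τ) {v : V} (hv : v ∈ σ) : c (persp σ τ v) = c v := by
  by_cases hvτ : v ∈ τ
  · rw [persp_of_mem hvτ]
  · obtain ⟨huτ, huσ⟩ := mem_sdiff.mp (h.persp_mem_sdiff hvτ)
    obtain ⟨x, hxσ, hx⟩ := mem_image.mp (hc.image_eq_univ hK h.1 ▸ mem_univ (c (persp σ τ v)))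
    have hxτ : x ∉ τ := fun hxτ => huσ (hc.injOn hK h.2.1.1 hxτ huτ hx ▸ hxσ)
    rw [← hx, h.eq_of_mem_sdiff (mem_sdiff.mpr ⟨hxσ, hxτ⟩) (mem_sdiff.mpr ⟨hv, hvτ⟩)]

theorem UnfReach.color_eq (hc : ProperColoring K c) (hK : IsComplex K) {p q : Finset V × V}
    (h : UnfReach K d p q) : c p.2 = c q.2 := by
  induction h with
  | refl => rfl
  | tail _ hstep ih =>
    rcases hstep with ⟨hqr, hq, -, hpersp⟩ | ⟨hrq, hr, -, hpersp⟩
    · rw [ih, ← hpersp, hc.apply_persp hK hqr hq]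
    · rw [ih, ← hpersp, hc.apply_persp hK hrq hr]

theorem StronglyConnected.unfReach_iff_color_eq (hconn : StronglyConnected K d)
    (hc : ProperColoring K c) (hK : IsComplex K) {σ τ : Finset V} (hσ : IsFacet K d σ)
    (hτ : IsFacet K d τ) {v w : V} (hv : v ∈ σ) (hw : w ∈ τ) :
    UnfReach K d (σ, v) (τ, w) ↔ c v = c w := by
  refine ⟨UnfReach.color_eq hc hK, fun hcvw => ?_⟩
  obtain ⟨γ, hγ, hhead, hlast⟩ := hconn σ τ hσ hτ
  have hreach := hγ.unfReach_projAlong hhead hlast hv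
  have hcol : c (projAlong γ v) = c w := (hreach.color_eq hc hK).symm.trans hcvw
  have hw' : projAlong γ v = w := hc.injOn hK hτ.1 (hreach.mem hv) hw hcol
  rwa [hw'] at hreach

end Coloring

theorem unfolding_component_count_general
    (K : Finset (Finset V)) (d : ℕ) (hK : IsComplex K)
    (hconn : StronglyConnected K d)
    (σ₀ : Finset V) (h0 : IsFacet K d σ₀) :
    (∀ τ w, IsFacet K d τ → w ∈ τ → ∃ v ∈ σ₀, UnfReach K d (σ₀, v) (τ, w)) ∧
    (∀ v ∈ σ₀, ∀ w ∈ σ₀,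
      UnfReach K d (σ₀, v) (σ₀, w) ↔
        ∃ γ, IsFacetPath K d γ ∧ γ.head? = some σ₀ ∧ γ.getLast? = some σ₀ ∧
          projAlong γ v = w) ∧
    ((∀ v ∈ σ₀, ∀ w ∈ σ₀, ∃ γ, IsFacetPath K d γ ∧ γ.head? = some σ₀ ∧
        γ.getLast? = some σ₀ ∧ projAlong γ v = w) →
      ∀ σ τ v w, IsFacet K d σ → IsFacet K d τ → v ∈ σ → w ∈ τ →
        UnfReach K d (σ, v) (τ, w)) ∧
    (∀ c : V → Fin (d + 1), ProperColoring K c →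
      (∀ σ τ v w, IsFacet K d σ → IsFacet K d τ → v ∈ σ → w ∈ τ →
        (UnfReach K d (σ, v) (τ, w) ↔ c v = c w)) ∧
      (∀ σ, IsFacet K d σ → ∀ i : Fin (d + 1), ∃! v, v ∈ σ ∧ c v = i)) := by
  have hbase := fun τ w (hτ : IsFacet K d τ) (hw : w ∈ τ) => hconn.exists_mem_unfReach h0 hτ hw
  refine ⟨hbase, fun v hv w _ => unfReach_iff_exists_projAlong h0 hv, ?_, fun c hc => ⟨?_, ?_⟩⟩
  · intro htrans σ τ v w hσ hτ hv hw
    obtain ⟨x, hx, hxv⟩ := hbase σ v hσ hv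
    obtain ⟨y, hy, hyw⟩ := hbase τ w hτ hw
    have hxy := (unfReach_iff_exists_projAlong h0 hx).mpr (htrans x hx y hy)
    exact hxv.symm.trans (hxy.trans hyw)
  · exact fun σ τ v w hσ hτ hv hw => hconn.unfReach_iff_color_eq hc hK hσ hτ hv hw
  · exact fun σ hσ i => hc.existsUnique_mem hK hσ i

/-- The components of the partial unfolding correspond to the orbits of
`Π(K,σ₀)` on `V(σ₀)`; if the action is transitive the unfolding is connected; if `K` is
foldable there are exactly `d+1` components, one per color, and on each facet each color
occurs exactly once (so each component projects isomorphically onto `K`). -/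
theorem unfolding_component_count
    (K : Finset (Finset V)) (d : ℕ) (hK : IsComplex K) (hpure : IsPure K d)
    (hconn : StronglyConnected K d)
    (σ₀ : Finset V) (h0 : IsFacet K d σ₀) :
    (∀ τ w, IsFacet K d τ → w ∈ τ → ∃ v ∈ σ₀, UnfReach K d (σ₀, v) (τ, w)) ∧
    (∀ v ∈ σ₀, ∀ w ∈ σ₀,
      UnfReach K d (σ₀, v) (σ₀, w) ↔
        ∃ γ, IsFacetPath K d γ ∧ γ.head? = some σ₀ ∧ γ.getLast? = some σ₀ ∧
          projAlong γ v = w) ∧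
    ((∀ v ∈ σ₀, ∀ w ∈ σ₀, ∃ γ, IsFacetPath K d γ ∧ γ.head? = some σ₀ ∧
        γ.getLast? = some σ₀ ∧ projAlong γ v = w) →
      ∀ σ τ v w, IsFacet K d σ → IsFacet K d τ → v ∈ σ → w ∈ τ →
        UnfReach K d (σ, v) (τ, w)) ∧
    (∀ c : V → Fin (d + 1), ProperColoring K c →
      (∀ σ τ v w, IsFacet K d σ → IsFacet K d τ → v ∈ σ → w ∈ τ →
        (UnfReach K d (σ, v) (τ, w) ↔ c v = c w)) ∧
      (∀ σ, IsFacet K d σ → ∀ i : Fin (d + 1), ∃! v, v ∈ σ ∧ c v = i)) :=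
  unfolding_component_count_general K d hK hconn σ₀ h0
end

section
/- Let (σ₀, σ₁, …, σ_l) be a shelling of a pure simplicial d-complex K, and let K' be obtained from K by stellarly subdividing an edge e that is not contained in any of the facets σ₀, …, σ_j for some j. Then K' admits a shelling whose initial segment is (σ₀, σ₁, …, σ_j). -/
open Finset

variable {V : Type*} [DecidableEq V]

/-- The shelling condition for attaching the facet `σ` to the union of the facets in
`prev`: the intersection is a nonempty pure `(d-1)`-dimensional complex. -/
def ShellStep (d : ℕ) (σ : Finset V) (prev : List (Finset V)) : Prop :=
  (∃ τ ∈ prev, (σ ∩ τ).Nonempty) ∧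
  ∀ τ ∈ prev, ∃ ρ ∈ prev, σ ∩ τ ⊆ σ ∩ ρ ∧ (σ ∩ ρ).card = d

/-- A shelling of a pure `d`-complex `K`: an ordering of all facets such that each facet
meets the union of its predecessors in a nonempty pure `(d-1)`-complex. -/
def IsShelling (K : Finset (Finset V)) (d : ℕ) (L : List (Finset V)) : Prop :=
  L.Nodup ∧ (∀ σ, IsFacet K d σ ↔ σ ∈ L) ∧
  ∀ i (h : i < L.length), 0 < i → ShellStep d (L.get ⟨i, h⟩) (L.take i)

/-!
Subdividing `e = {a, b}` keeps each facet avoiding `e` and splits each facet `σ ⊇ e` into the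
halves `u ∪ σ \ {a}` and `u ∪ σ \ {b}`; replace every facet of the shelling, in place, by its
halves. A ridge `σ ∩ ρ` of `σ` shared with a predecessor `ρ` survives as a shared ridge of each
new facet (coned with `u` when `e ⊆ ρ`), the second half of `σ` meets the first in a ridge, and
the one face that can lose its covering ridge, `σ \ {a, b}` in the first half, is protected by
the order of the halves. Facets avoiding `e`, in particular the initial segment, are untouched.
-/

namespace List

variable {α β : Type*}

theorem exists_eq_take_flatMap_append (f : α → List β) :
    ∀ (L : List α) (n : ℕ) (h : n < (L.flatMap f).length),
    ∃ (i : ℕ) (hi : i < L.length) (k : ℕ) (hk : k < (f L[i]).length),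
      (L.flatMap f)[n] = (f L[i])[k] ∧
      (L.flatMap f).take n = (L.take i).flatMap f ++ (f L[i]).take k
  | [], n, h => by simp at h
  | x :: L, n, h => by
    by_cases hn : n < (f x).length
    · refine ⟨0, by simp, n, hn, List.getElem_append_left hn, ?_⟩
      simp [List.take_append, Nat.sub_eq_zero_of_le hn.le]
    · rw [not_lt] at hn
      have h' : n - (f x).length < (L.flatMap f).length := by
        simp only [List.flatMap_cons, List.length_append] at h; omega
      obtain ⟨i, hi, k, hk, hget, htake⟩ := exists_eq_take_flatMap_append f L _ h'
      refine ⟨i + 1, by simpa using hi, k, by simpa using hk, ?_, ?_⟩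
      · simp only [List.flatMap_cons, List.getElem_append_right hn]
        simpa using hget
      · simp [List.take_append, List.take_of_length_le hn, htake]

theorem take_flatMap_of_forall_eq_singleton (f : α → List α) :
    ∀ (L : List α) (n : ℕ), (∀ x ∈ L.take n, f x = [x]) → (L.flatMap f).take n = L.take n
  | [], _, _ => by simp
  | _ :: _, 0, _ => by simp
  | x :: L, n + 1, h => by
    simp only [List.flatMap_cons, h x (by simp), List.take_succ_cons, List.singleton_append]
    rw [take_flatMap_of_forall_eq_singleton f L n fun y hy => h y (by simp [hy])]

end List

theorem isShelling_flatMap {K : Finset (Finset V)} {d : ℕ} {L : List (Finset V)}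
    (g : Finset V → List (Finset V)) (hL : L.Nodup) (hg : ∀ σ ∈ L, (g σ).Nodup)
    (hdisj : ∀ σ ∈ L, ∀ τ ∈ L, σ ≠ τ → List.Disjoint (g σ) (g τ))
    (hfacet : ∀ s, IsFacet K d s ↔ ∃ σ ∈ L, s ∈ g σ)
    (hhead : ∀ σ ∈ L.take 1, g σ = [σ])
    (hstep : ∀ i (hi : i < L.length), 0 < i → ∀ k (hk : k < (g L[i]).length),
      ShellStep d (g L[i])[k] ((L.take i).flatMap g ++ (g L[i]).take k)) :
    IsShelling K d (L.flatMap g) := by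
  refine ⟨List.nodup_flatMap.mpr ⟨hg, hL.imp_of_mem fun hσ hτ hne => hdisj _ hσ _ hτ hne⟩,
    fun s => (hfacet s).trans List.mem_flatMap.symm, fun n hn hn0 => ?_⟩
  obtain ⟨i, hi, k, hk, hget, htake⟩ := L.exists_eq_take_flatMap_append g n hn
  rw [List.get_eq_getElem, hget, htake]
  rcases Nat.eq_zero_or_pos i with rfl | hi0
  · have hlen := congrArg List.length htake
    have hmem : L[0] ∈ L.take 1 := by
      have := List.getElem_mem (l := L.take 1) (n := 0) (by simpa using hi)
      rwa [List.getElem_take] at this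
    have h1 : (g L[0]).length = 1 := by rw [hhead _ hmem]; rfl
    simp only [List.length_take, List.take_zero, List.flatMap_nil, List.nil_append] at hlen
    omega
  · exact hstep i hi hi0 k hk

/-- `s` is one of the facets of the subdivision that replace the facet `σ`. -/
def IsSubdivFacet (e : Finset V) (u : V) (σ s : Finset V) : Prop :=
  (¬ e ⊆ σ ∧ s = σ) ∨ (e ⊆ σ ∧ ∃ v ∈ e, s = insert u (σ.erase v))

theorem mem_stellarSub {K : Finset (Finset V)} {e : Finset V} {u : V} {s : Finset V} :
    s ∈ stellarSub K e u ↔ (s ∈ K ∧ ¬ e ⊆ s) ∨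
      ∃ g ∈ K, e ⊆ g ∧ ∃ v ∈ e, ∃ t ⊆ g.erase v, s = insert u t := by
  simp only [stellarSub, mem_union, mem_filter, mem_biUnion, mem_image, mem_powerset]
  grind

theorem isFacet_stellarSub_iff {K : Finset (Finset V)} {d : ℕ} {e : Finset V} {u : V}
    (hpure : IsPure K d) (hu : ∀ σ ∈ K, u ∉ σ) {s : Finset V} :
    IsFacet (stellarSub K e u) d s ↔ ∃ σ, IsFacet K d σ ∧ IsSubdivFacet e u σ s := by
  constructor
  · rintro ⟨hs, hcard⟩
    rcases mem_stellarSub.mp hs with ⟨hsK, hes⟩ | ⟨g, hg, heg, v, hv, t, ht, rfl⟩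
    · exact ⟨s, ⟨hsK, hcard⟩, .inl ⟨hes, rfl⟩⟩
    have hut : u ∉ t := fun h => hu g hg (mem_of_mem_erase (ht h))
    have htcard : t.card = d := by rw [card_insert_of_notMem hut] at hcard; omega
    obtain ⟨σ, -, hgσ, hσcard⟩ := hpure g hg
    have hgcard : g.card ≤ d + 1 := hσcard ▸ card_le_card hgσ
    have hvg : v ∈ g := heg hv
    have hgv : (g.erase v).card = g.card - 1 := card_erase_of_mem hvg
    have htg : t = g.erase v := eq_of_subset_of_card_le ht (by omega)
    have hgcard' : g.card = d + 1 := by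
      have := card_pos.mpr ⟨v, hvg⟩; rw [htg, hgv] at htcard; omega
    exact ⟨g, ⟨hg, hgcard'⟩, .inr ⟨heg, v, hv, by rw [htg]⟩⟩
  · rintro ⟨σ, ⟨hσ, hσcard⟩, ⟨heσ, rfl⟩ | ⟨heσ, v, hv, rfl⟩⟩
    · exact ⟨mem_stellarSub.mpr (.inl ⟨hσ, heσ⟩), hσcard⟩
    · refine ⟨mem_stellarSub.mpr (.inr ⟨σ, hσ, heσ, v, hv, _, subset_refl _, rfl⟩), ?_⟩
      rw [card_insert_of_notMem fun h => hu σ hσ (mem_of_mem_erase h),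
        card_erase_of_mem (heσ hv), hσcard]
      omega

namespace IsSubdivFacet

variable {e : Finset V} {u : V} {σ τ s : Finset V}

theorem insert_inter_subset (h : IsSubdivFacet e u τ s) (t : Finset V) :
    insert u t ∩ s ⊆ insert u (t ∩ τ) := by
  rcases h with ⟨-, rfl⟩ | ⟨-, v, -, rfl⟩ <;>
  · intro _; simp only [mem_inter, mem_insert, mem_erase]; tauto

theorem inter_subset_of_notMem (h : IsSubdivFacet e u τ s) (hu : u ∉ σ) :
    σ ∩ s ⊆ σ ∩ τ := by
  intro x hx
  have hxu : x ≠ u := fun hxu => hu (hxu ▸ (mem_inter.mp hx).1)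
  have := h.insert_inter_subset σ (inter_subset_inter_right (subset_insert u σ) hx)
  exact (mem_insert.mp this).resolve_left hxu

theorem eq_ite (h : IsSubdivFacet e u σ s) (hσ : u ∉ σ) :
    σ = if u ∈ s then s.erase u ∪ e else s := by
  rcases h with ⟨-, rfl⟩ | ⟨heσ, v, hv, rfl⟩
  · rw [if_neg hσ]
  · rw [if_pos (mem_insert_self _ _), erase_insert fun h => hσ (mem_of_mem_erase h),
      erase_union_of_mem hv, union_eq_left.mpr heσ]

theorem eq_of_isSubdivFacet (h₁ : IsSubdivFacet e u σ s) (h₂ : IsSubdivFacet e u τ s)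
    (hσ : u ∉ σ) (hτ : u ∉ τ) : σ = τ :=
  (h₁.eq_ite hσ).trans (h₂.eq_ite hτ).symm

end IsSubdivFacet

theorem exists_isSubdivFacet_inter_eq {e σ : Finset V} {u : V} (hu : u ∉ σ) (heσ : ¬ e ⊆ σ)
    (τ : Finset V) : ∃ s, IsSubdivFacet e u τ s ∧ σ ∩ s = σ ∩ τ := by
  by_cases heτ : e ⊆ τ
  · obtain ⟨v, hv, hvσ⟩ := not_subset.mp heσ
    refine ⟨insert u (τ.erase v), .inr ⟨heτ, v, hv, rfl⟩, ?_⟩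
    rw [inter_insert_of_notMem hu, inter_erase, erase_eq_of_notMem fun h => hvσ (mem_inter.mp h).1]
  · exact ⟨τ, .inl ⟨heτ, rfl⟩, rfl⟩

theorem exists_isSubdivFacet {e : Finset V} {v : V} (u : V) (hv : v ∈ e) (τ : Finset V) :
    ∃ s, IsSubdivFacet e u τ s := by
  by_cases h : e ⊆ τ
  · exact ⟨_, .inr ⟨h, v, hv, rfl⟩⟩
  · exact ⟨τ, .inl ⟨h, rfl⟩⟩

def CoveredByRidge (d : ℕ) (σ : Finset V) (P : List (Finset V)) (s : Finset V) : Prop :=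
  ∃ ρ ∈ P, s ⊆ σ ∩ ρ ∧ (σ ∩ ρ).card = d

theorem CoveredByRidge.mono {d : ℕ} {σ s t : Finset V} {P Q : List (Finset V)}
    (h : CoveredByRidge d σ P s) (hts : t ⊆ s) (hPQ : P ⊆ Q) : CoveredByRidge d σ Q t :=
  let ⟨ρ, hρ, hsρ, hcard⟩ := h
  ⟨ρ, hPQ hρ, hts.trans hsρ, hcard⟩

theorem ShellStep.pos {d : ℕ} {σ : Finset V} {P : List (Finset V)} (h : ShellStep d σ P) :
    0 < d := by
  obtain ⟨τ, hτ, hne⟩ := h.1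
  obtain ⟨ρ, -, hτρ, hcard⟩ := h.2 τ hτ
  exact hcard ▸ card_pos.mpr (hne.mono hτρ)

theorem shellStep_of_coveredByRidge {d : ℕ} {σ : Finset V} {P : List (Finset V)} (hd : 0 < d)
    (hP : P ≠ []) (h : ∀ τ ∈ P, CoveredByRidge d σ P (σ ∩ τ)) : ShellStep d σ P := by
  obtain ⟨τ, hτ⟩ := List.exists_mem_of_ne_nil P hP
  obtain ⟨ρ, hρ, -, hcard⟩ := h τ hτ
  exact ⟨⟨ρ, hρ, card_pos.mp (hcard ▸ hd)⟩, h⟩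

theorem ShellStep.of_isSubdivFacet {d : ℕ} {e σ : Finset V} {u : V} {prev P : List (Finset V)}
    (h : ShellStep d σ prev) (hu : u ∉ σ) (heσ : ¬ e ⊆ σ)
    (hP : ∀ s, s ∈ P ↔ ∃ τ ∈ prev, IsSubdivFacet e u τ s) : ShellStep d σ P := by
  have transfer : ∀ τ ∈ prev, ∃ s ∈ P, σ ∩ s = σ ∩ τ := fun τ hτ =>
    let ⟨s, hs, heq⟩ := exists_isSubdivFacet_inter_eq hu heσ τ
    ⟨s, (hP s).mpr ⟨τ, hτ, hs⟩, heq⟩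
  refine ⟨?_, fun s hs => ?_⟩
  · obtain ⟨τ, hτ, hne⟩ := h.1
    obtain ⟨s, hs, heq⟩ := transfer τ hτ
    exact ⟨s, hs, heq ▸ hne⟩
  · obtain ⟨τ, hτ, hsτ⟩ := (hP s).mp hs
    obtain ⟨ρ, hρ, hτρ, hcard⟩ := h.2 τ hτ
    obtain ⟨ρ', hρ', heq⟩ := transfer ρ hρ
    exact ⟨ρ', hρ', heq ▸ (hsτ.inter_subset_of_notMem hu).trans hτρ, heq ▸ hcard⟩

theorem inter_eq_erase_of_card {d : ℕ} {σ ρ : Finset V} {w : V} (hσ : σ.card = d + 1)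
    (hwσ : w ∈ σ) (hwρ : w ∉ ρ) (hcard : (σ ∩ ρ).card = d) : σ ∩ ρ = σ.erase w := by
  refine eq_of_subset_of_card_le (fun x hx => mem_erase.mpr ⟨?_, (mem_inter.mp hx).1⟩) ?_
  · rintro rfl; exact hwρ (mem_inter.mp hx).2
  · rw [card_erase_of_mem hwσ, hσ, hcard]; omega

section Halves

variable {d : ℕ} {σ : Finset V} {u z z' : V} {prev P : List (Finset V)}

theorem coveredByRidge_erase_inter_of_not_subset (hσ : σ.card = d + 1) (hzσ : z ∈ σ)
    (hz'σ : z' ∈ σ) {ρ : Finset V} (hρP : ρ ∈ P) (huρ : u ∉ ρ) (heρ : ¬ {z, z'} ⊆ ρ)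
    (hcard : (σ ∩ ρ).card = d)
    (hsafe : σ ∩ ρ = σ.erase z' →
      CoveredByRidge d (insert u (σ.erase z)) P ((σ.erase z).erase z')) :
    CoveredByRidge d (insert u (σ.erase z)) P ((σ ∩ ρ).erase z) := by
  obtain ⟨w, hw, hwρ⟩ := not_subset.mp heρ
  have hwσ : w ∈ σ := by rcases mem_insert.mp hw with rfl | hw <;> simp_all
  have hσρ := inter_eq_erase_of_card hσ hwσ hwρ hcard
  rcases mem_insert.mp hw with rfl | hw
  · have hAρ : insert u (σ.erase w) ∩ ρ = σ.erase w := by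
      rw [insert_inter_of_notMem huρ, erase_inter, hσρ, erase_idem]
    refine ⟨ρ, hρP, ?_, ?_⟩
    · rw [hAρ, hσρ, erase_idem]
    · rw [hAρ, card_erase_of_mem hwσ, hσ]; rfl
  · rw [mem_singleton.mp hw] at hσρ
    rw [hσρ, erase_right_comm]
    exact hsafe hσρ

theorem coveredByRidge_insert_erase_inter (hσ : σ.card = d + 1) (hzσ : z ∈ σ) (hz'σ : z' ∈ σ)
    (huσ : u ∉ σ) (huprev : ∀ τ ∈ prev, u ∉ τ) (hstep : ShellStep d σ prev)
    (hP : ∀ τ ∈ prev, ∀ s, IsSubdivFacet {z, z'} u τ s → s ∈ P)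
    (hsafe : ∀ ρ ∈ prev, σ ∩ ρ = σ.erase z' →
      CoveredByRidge d (insert u (σ.erase z)) P ((σ.erase z).erase z'))
    {τ s : Finset V} (hτ : τ ∈ prev) (hs : IsSubdivFacet {z, z'} u τ s) :
    CoveredByRidge d (insert u (σ.erase z)) P (insert u (σ.erase z) ∩ s) := by
  obtain ⟨ρ, hρ, hτρ, hcard⟩ := hstep.2 τ hτ
  by_cases heρ : {z, z'} ⊆ ρ
  · have hzσρ : z ∈ σ ∩ ρ := mem_inter.mpr ⟨hzσ, heρ (by simp)⟩
    have hAρ : insert u (σ.erase z) ∩ insert u (ρ.erase z) = insert u ((σ ∩ ρ).erase z) := by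
      ext x; simp only [mem_inter, mem_insert, mem_erase]; tauto
    refine ⟨insert u (ρ.erase z), hP ρ hρ _ (.inr ⟨heρ, z, by simp, rfl⟩), ?_, ?_⟩
    · rw [hAρ]
      refine (hs.insert_inter_subset _).trans (insert_subset_insert _ ?_)
      rw [erase_inter]
      exact erase_subset_erase z hτρ
    · rw [hAρ, card_insert_of_notMem fun h => huσ (mem_inter.mp (mem_of_mem_erase h)).1,
        card_erase_of_mem hzσρ, hcard]
      have := card_pos.mpr ⟨z, hzσρ⟩
      omega
  have heτ : ¬ {z, z'} ⊆ τ := fun h =>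
    heρ fun x hx => (mem_inter.mp (hτρ (mem_inter.mpr ⟨(insert_subset hzσ (by simpa)) hx, h hx⟩))).2
  obtain rfl : s = τ := by
    rcases hs with ⟨-, rfl⟩ | ⟨h, -⟩
    · rfl
    · exact absurd h heτ
  refine (coveredByRidge_erase_inter_of_not_subset hσ hzσ hz'σ (hP ρ hρ ρ (.inl ⟨heρ, rfl⟩))
    (huprev ρ hρ) heρ hcard (hsafe ρ hρ)).mono ?_ (List.Subset.refl P)
  rw [insert_inter_of_notMem (huprev s hτ), erase_inter]
  exact erase_subset_erase z hτρ

theorem shellStep_first_half (hσ : σ.card = d + 1) (hzσ : z ∈ σ) (hz'σ : z' ∈ σ)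
    (huσ : u ∉ σ) (huprev : ∀ τ ∈ prev, u ∉ τ) (hstep : ShellStep d σ prev)
    (hP : ∀ s, s ∈ P ↔ ∃ τ ∈ prev, IsSubdivFacet {z, z'} u τ s)
    (hsafe : ∀ ρ ∈ prev, σ ∩ ρ = σ.erase z' → ∃ ρ₂ ∈ prev, σ ∩ ρ₂ = σ.erase z) :
    ShellStep d (insert u (σ.erase z)) P := by
  have hforth : ∀ τ ∈ prev, ∀ s, IsSubdivFacet {z, z'} u τ s → s ∈ P :=
    fun τ hτ s hs => (hP s).mpr ⟨τ, hτ, hs⟩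
  obtain ⟨τ₀, hτ₀, -⟩ := hstep.1
  obtain ⟨s₀, hs₀⟩ := exists_isSubdivFacet u (mem_insert_self z {z'}) τ₀
  refine shellStep_of_coveredByRidge hstep.pos (List.ne_nil_of_mem (hforth τ₀ hτ₀ s₀ hs₀))
    fun s hs => ?_
  obtain ⟨τ, hτ, hτs⟩ := (hP s).mp hs
  refine coveredByRidge_insert_erase_inter hσ hzσ hz'σ huσ huprev hstep hforth ?_ hτ hτs
  intro ρ hρ hσρ
  obtain ⟨ρ₂, hρ₂, hσρ₂⟩ := hsafe ρ hρ hσρ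
  have hzρ₂ : z ∉ ρ₂ := fun h => by
    simpa [hσρ₂] using mem_inter.mpr ⟨hzσ, h⟩
  have hAρ₂ : insert u (σ.erase z) ∩ ρ₂ = σ.erase z := by
    rw [insert_inter_of_notMem (huprev ρ₂ hρ₂), erase_inter, hσρ₂, erase_idem]
  refine ⟨ρ₂, hforth ρ₂ hρ₂ ρ₂ (.inl ⟨fun h => hzρ₂ (h (by simp)), rfl⟩), ?_, ?_⟩
  · rw [hAρ₂]; exact erase_subset _ _
  · rw [hAρ₂, card_erase_of_mem hzσ, hσ]; rfl

theorem shellStep_second_half (hzz' : z ≠ z') (hσ : σ.card = d + 1) (hzσ : z ∈ σ)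
    (hz'σ : z' ∈ σ) (huσ : u ∉ σ) (huprev : ∀ τ ∈ prev, u ∉ τ) (hstep : ShellStep d σ prev)
    (hP : ∀ s, s ∈ P ↔ ∃ τ ∈ prev, IsSubdivFacet {z, z'} u τ s) :
    ShellStep d (insert u (σ.erase z)) (P ++ [insert u (σ.erase z')]) := by
  have hAB : insert u (σ.erase z) ∩ insert u (σ.erase z') = insert u ((σ.erase z).erase z') := by
    ext x; simp only [mem_inter, mem_insert, mem_erase]; tauto
  have hABcard : (insert u ((σ.erase z).erase z')).card = d := by
    rw [card_insert_of_notMem fun h => huσ (mem_of_mem_erase (mem_of_mem_erase h)),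
      card_erase_of_mem (mem_erase.mpr ⟨hzz'.symm, hz'σ⟩), card_erase_of_mem hzσ, hσ]
    have := card_pos.mpr ⟨z', mem_erase.mpr ⟨hzz'.symm, hz'σ⟩⟩
    rw [card_erase_of_mem hzσ, hσ] at this
    omega
  have hcovB : ∀ t ⊆ insert u ((σ.erase z).erase z'),
      CoveredByRidge d (insert u (σ.erase z)) (P ++ [insert u (σ.erase z')]) t :=
    fun t ht => ⟨_, by simp, hAB ▸ ht, hAB ▸ hABcard⟩
  refine shellStep_of_coveredByRidge hstep.pos (by simp) fun s hs => ?_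
  rcases List.mem_append.mp hs with hs | hs
  · obtain ⟨τ, hτ, hτs⟩ := (hP s).mp hs
    exact coveredByRidge_insert_erase_inter hσ hzσ hz'σ huσ huprev hstep
      (fun τ hτ s hs => List.mem_append_left _ ((hP s).mpr ⟨τ, hτ, hs⟩))
      (fun _ _ _ => hcovB _ (subset_insert _ _)) hτ hτs
  · rw [List.mem_singleton.mp hs]
    exact hcovB _ hAB.subset

end Halves

/-- The first half `u ∪ σ \ {z}` meets a predecessor through `σ \ {z'}` only in `σ \ {z, z'}`,
which lies in a ridge of it only if `σ \ {z}` is shared with a predecessor too; so `u ∪ σ \ {a}`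
goes first exactly when `σ \ {a}` is shared with a facet of `prev`. -/
def subdivHalves (a b u : V) (prev : List (Finset V)) (σ : Finset V) : List (Finset V) :=
  if {a, b} ⊆ σ then
    if ∃ ρ ∈ prev, σ ∩ ρ = σ.erase a then [insert u (σ.erase a), insert u (σ.erase b)]
    else [insert u (σ.erase b), insert u (σ.erase a)]
  else [σ]

section SubdivHalves

variable {a b u : V} {prev : List (Finset V)} {σ : Finset V}

theorem subdivHalves_of_not_subset (h : ¬ {a, b} ⊆ σ) : subdivHalves a b u prev σ = [σ] :=
  if_neg h

theorem subdivHalves_of_subset (hab : a ≠ b) (h : {a, b} ⊆ σ) :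
    ∃ z z', ({z, z'} : Finset V) = {a, b} ∧ z ≠ z' ∧
      subdivHalves a b u prev σ = [insert u (σ.erase z), insert u (σ.erase z')] ∧
      ∀ ρ ∈ prev, σ ∩ ρ = σ.erase z' → ∃ ρ₂ ∈ prev, σ ∩ ρ₂ = σ.erase z := by
  unfold subdivHalves
  rw [if_pos h]
  split_ifs with hcov
  · exact ⟨a, b, rfl, hab, rfl, fun _ _ _ => hcov⟩
  · exact ⟨b, a, pair_comm b a, hab.symm, rfl, fun ρ hρ hσρ => absurd ⟨ρ, hρ, hσρ⟩ hcov⟩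

theorem mem_subdivHalves {s : Finset V} :
    s ∈ subdivHalves a b u prev σ ↔ IsSubdivFacet {a, b} u σ s := by
  unfold subdivHalves IsSubdivFacet
  split_ifs with h <;> simp [h, or_comm]

theorem nodup_subdivHalves (hab : a ≠ b) (hu : u ∉ σ) : (subdivHalves a b u prev σ).Nodup := by
  by_cases h : {a, b} ⊆ σ
  · obtain ⟨z, z', hzz, hne, heq, -⟩ := subdivHalves_of_subset (u := u) (prev := prev) hab h
    have hzσ : z ∈ σ := h (hzz ▸ mem_insert_self z {z'})
    have hz'σ : z' ∈ σ := h (hzz ▸ mem_insert_of_mem (mem_singleton_self z'))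
    rw [heq]
    refine List.nodup_cons.mpr ⟨fun hmem => ?_, List.nodup_singleton _⟩
    have hzz' := List.mem_singleton.mp hmem
    have := congrArg (fun s => s.erase u) hzz'
    simp only [erase_insert fun h => hu (mem_of_mem_erase h)] at this
    exact hne (erase_injOn σ hzσ hz'σ this)
  · rw [subdivHalves_of_not_subset h]
    exact List.nodup_singleton σ

end SubdivHalves

theorem shellStep_getElem_subdivHalves {d : ℕ} {a b u : V} {σ : Finset V}
    {prev P : List (Finset V)} (hab : a ≠ b) (hσ : σ.card = d + 1) (huσ : u ∉ σ)
    (huprev : ∀ τ ∈ prev, u ∉ τ) (hstep : ShellStep d σ prev)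
    (hP : ∀ s, s ∈ P ↔ ∃ τ ∈ prev, IsSubdivFacet {a, b} u τ s)
    {k : ℕ} (hk : k < (subdivHalves a b u prev σ).length) :
    ShellStep d (subdivHalves a b u prev σ)[k] (P ++ (subdivHalves a b u prev σ).take k) := by
  by_cases h : {a, b} ⊆ σ
  · obtain ⟨z, z', hzz, hne, heq, hsafe⟩ := subdivHalves_of_subset (u := u) (prev := prev) hab h
    have hzσ : z ∈ σ := h (hzz ▸ mem_insert_self z {z'})
    have hz'σ : z' ∈ σ := h (hzz ▸ mem_insert_of_mem (mem_singleton_self z'))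
    rw [← hzz] at hP
    simp only [heq] at hk ⊢
    match k, hk with
    | 0, _ => simpa using shellStep_first_half hσ hzσ hz'σ huσ huprev hstep hP hsafe
    | 1, _ =>
      rw [pair_comm] at hP
      simpa using shellStep_second_half hne.symm hσ hz'σ hzσ huσ huprev hstep hP
  · simp only [subdivHalves_of_not_subset h, List.length_singleton, Nat.lt_one_iff] at hk ⊢
    subst hk
    simpa using hstep.of_isSubdivFacet huσ h hP

theorem shelling_preserved_under_stellar_general
    (K : Finset (Finset V)) (d : ℕ) (hpure : IsPure K d)
    (L : List (Finset V)) (hshell : IsShelling K d L)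
    (e : Finset V) (hecard : e.card = 2)
    (u : V) (hu : u ∉ vertexSet K)
    (j : ℕ) (hj : ∀ σ ∈ L.take (j + 1), ¬ e ⊆ σ) :
    ∃ L' : List (Finset V), IsShelling (stellarSub K e u) d L' ∧
      L'.take (j + 1) = L.take (j + 1) := by
  obtain ⟨hnodup, hfacet, hsteps⟩ := hshell
  obtain ⟨a, b, hab, rfl⟩ := card_eq_two.mp hecard
  have huK : ∀ σ ∈ K, u ∉ σ := fun σ hσ huσ => hu (mem_biUnion.mpr ⟨σ, hσ, huσ⟩)
  have huL : ∀ σ ∈ L, u ∉ σ := fun σ hσ => huK σ ((hfacet σ).mpr hσ).1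
  let g σ := subdivHalves a b u (L.take (L.idxOf σ)) σ
  have hsingle : ∀ σ ∈ L.take (j + 1), g σ = [σ] :=
    fun σ hσ => subdivHalves_of_not_subset (hj σ hσ)
  refine ⟨L.flatMap g, isShelling_flatMap g hnodup
    (fun σ hσ => nodup_subdivHalves hab (huL σ hσ))
    (fun σ hσ τ hτ hne s hsσ hsτ => hne ((mem_subdivHalves.mp hsσ).eq_of_isSubdivFacet
      (mem_subdivHalves.mp hsτ) (huL σ hσ) (huL τ hτ)))
    (fun s => by simp only [isFacet_stellarSub_iff hpure huK, hfacet, g, mem_subdivHalves])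
    (fun σ hσ => hsingle σ (List.take_subset_take_left L (by omega) hσ))
    (fun i hi hi0 k hk => ?_), L.take_flatMap_of_forall_eq_singleton g (j + 1) hsingle⟩
  have hidx : L.idxOf L[i] = i := hnodup.idxOf_getElem i hi
  simp only [g, hidx] at hk ⊢
  refine shellStep_getElem_subdivHalves hab ((hfacet _).mpr (List.getElem_mem hi)).2
    (huL _ (List.getElem_mem hi)) (fun τ hτ => huL τ (List.take_subset _ _ hτ))
    (hsteps i hi hi0) (fun s => ?_) hk
  simp only [List.mem_flatMap, mem_subdivHalves]

/-- If `K` is shellable and the edge `e` is not contained in any of the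
first `j+1` facets of a shelling, then the stellar subdivision of `K` at `e` admits a
shelling with the same initial segment. -/
theorem shelling_preserved_under_stellar
    [Infinite V]
    (K : Finset (Finset V)) (d : ℕ) (hK : IsComplex K) (hpure : IsPure K d)
    (L : List (Finset V)) (hshell : IsShelling K d L)
    (e : Finset V) (he : e ∈ K) (hecard : e.card = 2)
    (u : V) (hu : u ∉ vertexSet K)
    (j : ℕ) (hj : ∀ σ ∈ L.take (j + 1), ¬ e ⊆ σ) :
    ∃ L' : List (Finset V), IsShelling (stellarSub K e u) d L' ∧
      L'.take (j + 1) = L.take (j + 1) :=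
  shelling_preserved_under_stellar_general K d hpure L hshell e hecard u hu j hj
end
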